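/- arXiv:1908.03172 — 2 statements merged into one kernel-verified Lean document; each statement's English description precedes it below -/
import Mathlib

section
/- Let G be a minimally non-(3,4)-colorable graph with girth at least 5, and let C = u_1 u_2 u_3 u_4 u_5 u_6 be a 6-cycle in G such that exactly one of the vertices u_1, ..., u_6 has degree 2 and none of them is a 5p-vertex. Then at most four of the vertices u_1, ..., u_6 are 5s-vertices or 6p-vertices. -/
/-- The degree of a vertex: the number of its neighbors. -/
noncomputable def degN {V : Type*} (G : SimpleGraph V) (v : V) : ℕ :=
  {w | G.Adj v w}.ncard

/-- `c` is a (3,4)-coloring of `G`: every vertex gets value 3 or 4, and every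
vertex with value `i` has at most `i` neighbors with value `i`. -/
def IsColoring34 {V : Type*} (G : SimpleGraph V) (c : V → ℕ) : Prop :=
  (∀ v, c v = 3 ∨ c v = 4) ∧ ∀ v, {w | G.Adj v w ∧ c w = c v}.ncard ≤ c v

/-- `G` is (3,4)-colorable. -/
def Colorable34 {V : Type*} (G : SimpleGraph V) : Prop :=
  ∃ c, IsColoring34 G c

/-- The graph `G − v` obtained by deleting the vertex `v` and its incident edges
(keeping `v` as an isolated vertex, which does not affect (3,4)-colorability). -/
def deleteVert {V : Type*} (G : SimpleGraph V) (v : V) : SimpleGraph V where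
  Adj a b := G.Adj a b ∧ a ≠ v ∧ b ≠ v
  symm := ⟨fun _ _ ⟨h, ha, hb⟩ => ⟨h.symm, hb, ha⟩⟩
  loopless := ⟨fun a ⟨h, _, _⟩ => G.loopless.irrefl a h⟩

/-- `G` is minimally non-(3,4)-colorable. -/
def MinNonColorable34 {V : Type*} (G : SimpleGraph V) : Prop :=
  ¬ Colorable34 G ∧ (∀ v, Colorable34 (deleteVert G v)) ∧
    ∀ e ∈ G.edgeSet, Colorable34 (G.deleteEdges {e})

/-- `u` is `i`-saturated under the coloring `c` of the graph `G`. -/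
def Saturated34 {V : Type*} (G : SimpleGraph V) (c : V → ℕ) (i : ℕ) (u : V) : Prop :=
  c u = i ∧ {w | G.Adj u w ∧ c w = i}.ncard = i

/-- `u` can be recolored: changing the color of `u` to the other color
(`7 - c u` swaps 3 and 4) again yields a (3,4)-coloring of `G`. -/
def Recolorable34 {V : Type*} [DecidableEq V] (G : SimpleGraph V) (c : V → ℕ) (u : V) : Prop :=
  IsColoring34 G (Function.update c u (7 - c u))

/-- The number of 3^+-neighbors of `x` in `G` (neighbors of degree at least 3). -/
noncomputable def tpn {V : Type*} (G : SimpleGraph V) (x : V) : ℕ :=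
  {w | G.Adj x w ∧ 3 ≤ degN G w}.ncard

/-- A 5p-vertex (poor 5-vertex): degree 5 with exactly one 3^+-neighbor. -/
def Is5p {V : Type*} (G : SimpleGraph V) (x : V) : Prop := degN G x = 5 ∧ tpn G x = 1

/-- A 5s-vertex (semi-poor 5-vertex): degree 5 with exactly two 3^+-neighbors. -/
def Is5s {V : Type*} (G : SimpleGraph V) (x : V) : Prop := degN G x = 5 ∧ tpn G x = 2

/-- A 6p-vertex (poor 6-vertex): degree 6 with exactly one 3^+-neighbor. -/
def Is6p {V : Type*} (G : SimpleGraph V) (x : V) : Prop := degN G x = 6 ∧ tpn G x = 1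

/-- `G` has girth at least 5: no 3-cycles and no 4-cycles. -/
def GirthAtLeast5 {V : Type*} (G : SimpleGraph V) : Prop :=
  (∀ a b c : V, G.Adj a b → G.Adj b c → ¬ G.Adj c a) ∧
  (∀ a b c d : V, a ≠ c → b ≠ d →
    G.Adj a b → G.Adj b c → G.Adj c d → ¬ G.Adj d a)

/-! Suppose five vertices of `C` are 5s- or 6p-vertices and rotate `C` so that `u1` has degree 2.
Then `u3`, `u4`, `u5` have two 3⁺-neighbours on `C`, so they are 5s-vertices. Take a
(3,4)-coloring `c` of `G − u1`. Since `u1` cannot be colored, for each `i ∈ {3,4}` a neighbour of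
`u1` is `i`-saturated; up to reflecting `C`, `c u2 = 3` and `u6` is 4-saturated. Flipping the
colours of `u6`, of `u5 u6`, or of `u4 u5 u6` (according to whether `u5` is 3-saturated and `u4`
is 4-saturated) gives a coloring of `G − u1` in which both neighbours of `u1` have colour 3, and
then `u1` can be colored 4, a contradiction. Each flip deletes a vertex and reinserts it with the
new colour, which is possible when none of its neighbours is saturated in that colour; neighbours
of degree at most 2 never are, and this is where the poverty of `u5` and `u6` enters. -/

open Function

section

variable {V : Type*} {G H : SimpleGraph V} {c : V → ℕ} {i : ℕ} {u x : V}

theorem deleteVert_le (G : SimpleGraph V) (u : V) : deleteVert G u ≤ G := fun _ _ h => h.1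

theorem is5s_of_two_le_tpn (h : Is5s G x ∨ Is6p G x) (ht : 2 ≤ tpn G x) : Is5s G x :=
  h.resolve_right fun h6 => by have := h6.2; omega

theorem saturated34_update_iff [DecidableEq V] {y : V} {j : ℕ} (hne : x ≠ y)
    (hadj : ¬ G.Adj x y) : Saturated34 G (update c y j) i x ↔ Saturated34 G c i x := by
  have hset : {w | G.Adj x w ∧ update c y j w = i} = {w | G.Adj x w ∧ c w = i} :=
    Set.ext fun w => and_congr_right fun hw => by
      rw [update_of_ne (by rintro rfl; exact hadj hw)]
  simp only [Saturated34, hset, update_of_ne hne]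

section Finite

variable [Finite V]

theorem forall_ne_of_ncard_le_ncard_sep_add_one {S : Set V} {P : V → Prop} {x0 : V}
    (hx0 : x0 ∈ S) (h0 : ¬ P x0) (h : S.ncard ≤ {x ∈ S | P x}.ncard + 1) :
    ∀ y ∈ S, y ≠ x0 → P y := by
  have hsub : {x ∈ S | P x} ⊆ S \ {x0} := fun x hx => ⟨hx.1, fun h => h0 (h ▸ hx.2)⟩
  have heq := Set.eq_of_subset_of_ncard_le hsub
    (by rw [Set.ncard_sdiff_singleton_of_mem hx0]; omega)
  intro y hy hne
  have hy' : y ∈ {x ∈ S | P x} := heq ▸ ⟨hy, hne⟩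
  exact hy'.2

theorem ncard_adj_mono (hle : H ≤ G) (v : V) (p : V → Prop) :
    {w | H.Adj v w ∧ p w}.ncard ≤ {w | G.Adj v w ∧ p w}.ncard :=
  Set.ncard_le_ncard fun _ hw => ⟨hle hw.1, hw.2⟩

theorem ncard_adj_le_degN (v : V) (p : V → Prop) : {w | G.Adj v w ∧ p w}.ncard ≤ degN G v :=
  Set.ncard_le_ncard fun _ hw => hw.1

theorem degN_mono (hle : H ≤ G) (v : V) : degN H v ≤ degN G v :=
  Set.ncard_le_ncard fun _ hw => hle hw

theorem degN_deleteVert_lt {v : V} (h : G.Adj v u) : degN (deleteVert G u) v < degN G v :=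
  Set.ncard_lt_ncard ⟨fun _ hw => hw.1, fun hsub => (hsub h).2.2 rfl⟩

theorem ncard_adj_three_add_ncard_adj_four (hc : ∀ w, c w = 3 ∨ c w = 4) (v : V) :
    {w | G.Adj v w ∧ c w = 3}.ncard + {w | G.Adj v w ∧ c w = 4}.ncard = degN G v := by
  rw [← Set.ncard_union_eq]
  · congr 1
    ext w
    simp only [Set.mem_union, Set.mem_ofPred_eq, ← and_or_left]
    exact and_iff_left (hc w)
  · exact Set.disjoint_left.2 fun w h3 h4 => by simp_all

theorem adj_eq_or_eq_of_degN_le_two {a b w : V} (hdeg : degN G u ≤ 2) (ha : G.Adj u a)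
    (hb : G.Adj u b) (hab : a ≠ b) (hw : G.Adj u w) : w = a ∨ w = b := by
  have hsub : ({a, b} : Set V) ⊆ {w | G.Adj u w} := by
    rintro _ (rfl | rfl) <;> assumption
  have heq := Set.eq_of_subset_of_ncard_le hsub (by rw [Set.ncard_pair hab]; exact hdeg)
  have hw' : w ∈ ({a, b} : Set V) := heq ▸ hw
  simpa using hw'

theorem degN_le_two_of_tpn_le {s : Set V} {w : V} (hs : s ⊆ {w | G.Adj x w ∧ 3 ≤ degN G w})
    (h : tpn G x ≤ s.ncard) (hw : G.Adj x w) (hws : w ∉ s) : degN G w ≤ 2 := by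
  by_contra! hdeg
  rw [Set.eq_of_subset_of_ncard_le hs h] at hws
  exact hws ⟨hw, hdeg⟩

theorem two_le_tpn {a b : V} (ha : G.Adj x a) (hb : G.Adj x b) (hab : a ≠ b)
    (hda : 3 ≤ degN G a) (hdb : 3 ≤ degN G b) : 2 ≤ tpn G x := by
  rw [← Set.ncard_pair hab]
  exact Set.ncard_le_ncard (by rintro _ (rfl | rfl) <;> simp [*])

theorem IsColoring34.mono (hc : IsColoring34 G c) (hle : H ≤ G) : IsColoring34 H c :=
  ⟨hc.1, fun v => (ncard_adj_mono hle v (c · = c v)).trans (hc.2 v)⟩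

theorem Saturated34.of_le (hc : IsColoring34 G c) (hle : H ≤ G) (hs : Saturated34 H c i x) :
    Saturated34 G c i x := by
  refine ⟨hs.1, le_antisymm ?_ ?_⟩
  · simpa only [hs.1] using hc.2 x
  · simpa only [hs.2] using ncard_adj_mono hle x (c · = i)

theorem not_saturated34_of_degN_lt (hle : H ≤ G) (h : degN G x < i) : ¬ Saturated34 H c i x :=
  fun hs => by
    have := (ncard_adj_le_degN (G := H) x (c · = i)).trans (degN_mono hle x)
    have := hs.2
    omega

theorem Saturated34.ncard_adj_add_eq (hc : ∀ w, c w = 3 ∨ c w = 4) {v : V} {j : ℕ}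
    (hs : Saturated34 H c i v) (hij : i + j = 7) :
    {w | H.Adj v w ∧ c w = j}.ncard + i = degN H v := by
  have := ncard_adj_three_add_ncard_adj_four hc (G := H) v
  have := hs.2
  have hi := hc v
  rw [hs.1] at hi
  rcases hi with rfl | rfl
  · obtain rfl : j = 4 := by omega
    omega
  · obtain rfl : j = 3 := by omega
    omega

section Update

variable [DecidableEq V]

theorem IsColoring34.update_of_deleteVert (hc : IsColoring34 (deleteVert G u) c)
    (hi : i = 3 ∨ i = 4) (hu : {w | G.Adj u w ∧ c w = i}.ncard ≤ i)
    (hnb : ∀ x, G.Adj u x → ¬ Saturated34 (deleteVert G u) c i x) :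
    IsColoring34 G (update c u i) := by
  refine ⟨fun v => ?_, fun v => ?_⟩
  · rcases eq_or_ne v u with rfl | hv
    · simpa using hi
    · simpa [hv] using hc.1 v
  rcases eq_or_ne v u with rfl | hv
  · have hset : {w | G.Adj v w ∧ update c v i w = i} = {w | G.Adj v w ∧ c w = i} :=
      Set.ext fun w => and_congr_right fun hw => by rw [update_of_ne hw.ne']
    rwa [update_self, hset]
  rw [update_of_ne hv]
  set N := {w | (deleteVert G u).Adj v w ∧ c w = c v}
  have hsub : {w | G.Adj v w ∧ update c u i w = c v} ⊆ insert u N := by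
    rintro w ⟨hw, hcw⟩
    rcases eq_or_ne w u with rfl | hwu
    · exact Or.inl rfl
    · exact Or.inr ⟨⟨hw, hv, hwu⟩, by rwa [update_of_ne hwu] at hcw⟩
  by_cases hvu : G.Adj v u ∧ c v = i
  · -- `v` gains the neighbour `u` of its colour, but it was not saturated in `G − u`
    have hlt : N.ncard < c v :=
      lt_of_le_of_ne (hc.2 v) fun h => hnb v hvu.1.symm ⟨hvu.2, hvu.2 ▸ h⟩
    exact (Set.ncard_le_ncard hsub).trans ((Set.ncard_insert_le u N).trans hlt)
  · have hsub' : {w | G.Adj v w ∧ update c u i w = c v} ⊆ N := fun w hw => by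
      rcases hsub hw with rfl | hN
      · exact absurd ⟨hw.1, by simpa using hw.2.symm⟩ hvu
      · exact hN
    exact (Set.ncard_le_ncard hsub').trans (hc.2 v)

theorem IsColoring34.update_of_forall_not_saturated34 (hc : IsColoring34 G c) (hi : i = 3 ∨ i = 4)
    (hu : {w | G.Adj u w ∧ c w = i}.ncard ≤ i)
    (hnb : ∀ x, G.Adj u x → ¬ Saturated34 (deleteVert G u) c i x) :
    IsColoring34 G (update c u i) :=
  (hc.mono (deleteVert_le G u)).update_of_deleteVert hi hu hnb

theorem IsColoring34.update_of_forall_adj_ne (hc : IsColoring34 (deleteVert G u) c)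
    (hi : i = 3 ∨ i = 4) (h : ∀ w, G.Adj u w → c w ≠ i) : IsColoring34 G (update c u i) := by
  refine hc.update_of_deleteVert hi ?_ fun x hx hs => h x hx hs.1
  have hempty : {w | G.Adj u w ∧ c w = i} = ∅ :=
    Set.eq_empty_of_forall_notMem fun w hw => h w hw.1 hw.2
  rw [hempty, Set.ncard_empty]
  exact Nat.zero_le i

end Update

theorem exists_saturated34_of_not_colorable34 (hnc : ¬ Colorable34 G) (hu : degN G u ≤ 3)
    (hc : IsColoring34 (deleteVert G u) c) (hi : i = 3 ∨ i = 4) :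
    ∃ x, G.Adj u x ∧ Saturated34 (deleteVert G u) c i x := by
  classical
  by_contra! h
  have hu' : {w | G.Adj u w ∧ c w = i}.ncard ≤ i := (ncard_adj_le_degN u _).trans (by omega)
  exact hnc ⟨_, hc.update_of_deleteVert hi hu' h⟩

theorem colorable34_of_deleteVert_of_eq {a b : V} (hdeg : degN G u ≤ 2) (ha : G.Adj u a)
    (hb : G.Adj u b) (hab : a ≠ b) (hc : IsColoring34 (deleteVert G u) c) (heq : c a = c b) :
    Colorable34 G := by
  classical
  have ha34 := hc.1 a
  refine ⟨_, hc.update_of_forall_adj_ne (i := 7 - c a) (by omega) fun w hw => ?_⟩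
  rcases adj_eq_or_eq_of_degN_le_two hdeg ha hb hab hw with rfl | rfl <;> omega

end Finite

section Cycle

variable [Finite V] [DecidableEq V] {u1 u2 u3 u4 u5 u6 x0 : V}

theorem saturated34_three_of_saturated34_four (hnc : ¬ Colorable34 G)
    (a12 : G.Adj u1 u2) (a56 : G.Adj u5 u6) (a61 : G.Adj u6 u1) (h26 : u2 ≠ u6)
    (hdeg1 : degN G u1 = 2) (hdeg5 : 3 ≤ degN G u5) (h6 : Is5s G u6 ∨ Is6p G u6)
    (hc : IsColoring34 (deleteVert G u1) c) (hc2 : c u2 = 3)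
    (hsat6 : Saturated34 (deleteVert G u1) c 4 u6) : Saturated34 (deleteVert G u1) c 3 u5 := by
  by_contra hsat5
  have := hsat6.ncard_adj_add_eq hc.1 (j := 3) rfl
  have := degN_deleteVert_lt a61
  have hdeg6 : degN G u6 ≤ 6 := h6.elim (·.1.le.trans (by decide)) (·.1.le)
  set K := deleteVert G u1
  refine hnc (colorable34_of_deleteVert_of_eq hdeg1.le a12 a61.symm h26
    (c := update c u6 3) ?_ (by simp [h26, hc2]))
  refine hc.update_of_forall_not_saturated34 (Or.inl rfl) (by omega) fun x hx hs => ?_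
  rcases eq_or_ne x u5 with rfl | hx5
  · exact hsat5 (hs.of_le hc (deleteVert_le K u6))
  rcases h6 with h6 | h6
  · have := Set.ncard_ne_zero_of_mem (s := {w | K.Adj u6 w ∧ c w = 3}) ⟨hx, hs.1⟩
    have := h6.1
    omega
  · have := degN_le_two_of_tpn_le (s := {u5}) (by simp [a56.symm, hdeg5])
      (by rw [Set.ncard_singleton, h6.2]) hx.1 hx5
    exact not_saturated34_of_degN_lt ((deleteVert_le _ _).trans (deleteVert_le _ _)) (by omega) hs

theorem isColoring34_update_of_is6p (hc : IsColoring34 (deleteVert G u1) c)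
    (a56 : G.Adj u5 u6) (a61 : G.Adj u6 u1) (hdeg5 : 3 ≤ degN G u5) (h6 : Is6p G u6)
    (hsat6 : Saturated34 (deleteVert G u1) c 4 u6) :
    IsColoring34 (deleteVert (deleteVert G u1) u5) (update c u6 3) := by
  have := hsat6.ncard_adj_add_eq hc.1 (j := 3) rfl
  have := degN_deleteVert_lt a61
  have := h6.1
  refine (hc.mono (deleteVert_le _ u5)).update_of_forall_not_saturated34 (Or.inl rfl)
    ((ncard_adj_mono (deleteVert_le _ u5) u6 _).trans (by omega)) fun x hx => ?_
  have := degN_le_two_of_tpn_le (s := {u5}) (by simp [a56.symm, hdeg5])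
    (by rw [Set.ncard_singleton, h6.2]) hx.1.1 hx.2.2
  exact not_saturated34_of_degN_lt ((deleteVert_le _ _).trans <| (deleteVert_le _ _).trans
    (deleteVert_le _ _)) (by omega)

theorem saturated34_four_of_saturated34_three (hnc : ¬ Colorable34 G)
    (a12 : G.Adj u1 u2) (a45 : G.Adj u4 u5) (a56 : G.Adj u5 u6) (a61 : G.Adj u6 u1)
    (n46 : ¬ G.Adj u4 u6) (h25 : u2 ≠ u5) (h26 : u2 ≠ u6) (h46 : u4 ≠ u6)
    (hdeg1 : degN G u1 = 2) (hdeg4 : 3 ≤ degN G u4) (h5 : Is5s G u5) (h6 : Is6p G u6)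
    (hc : IsColoring34 (deleteVert G u1) c) (hc2 : c u2 = 3)
    (hsat6 : Saturated34 (deleteVert G u1) c 4 u6)
    (hsat5 : Saturated34 (deleteVert G u1) c 3 u5) : Saturated34 (deleteVert G u1) c 4 u4 := by
  by_contra hsat4
  have hc1 := isColoring34_update_of_is6p hc a56 a61 (by have := h5.1; omega) h6 hsat6
  have := hsat5.ncard_adj_add_eq hc.1 (j := 4) rfl
  have := degN_mono (deleteVert_le G u1) u5
  have := h5.1
  have hdeg6 := h6.1
  set K := deleteVert G u1
  refine hnc (colorable34_of_deleteVert_of_eq hdeg1.le a12 a61.symm h26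
    (c := update (update c u6 3) u5 4) ?_ (by simp [h25, h26, hc2, a56.ne.symm]))
  refine hc1.update_of_deleteVert (Or.inr rfl) ?_ fun x hx hs => ?_
  · have hsub : {w | K.Adj u5 w ∧ update c u6 3 w = 4} ⊆ {w | K.Adj u5 w ∧ c w = 4} :=
      fun w ⟨hw, hcw⟩ => ⟨hw, by rwa [update_of_ne (by rintro rfl; simp at hcw)] at hcw⟩
    exact (Set.ncard_le_ncard hsub).trans (by omega)
  rcases eq_or_ne x u4 with rfl | hx4
  · have hs' := (saturated34_update_iff (G := deleteVert K u5) h46 fun h => n46 h.1.1).1 hs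
    exact hsat4 (hs'.of_le hc (deleteVert_le K u5))
  rcases eq_or_ne x u6 with rfl | hx6
  · exact absurd hs.1 (by simp)
  have := degN_le_two_of_tpn_le (s := {u4, u6})
    (by rintro _ (rfl | rfl) <;> simp [a45.symm, a56, hdeg4, hdeg6])
    (by rw [Set.ncard_pair h46, h5.2]) hx.1 (by simp [hx4, hx6])
  exact not_saturated34_of_degN_lt ((deleteVert_le _ _).trans (deleteVert_le _ _)) (by omega) hs

theorem not_saturated34_four_of_saturated34_three (hnc : ¬ Colorable34 G)
    (a12 : G.Adj u1 u2) (a45 : G.Adj u4 u5) (a56 : G.Adj u5 u6) (a61 : G.Adj u6 u1)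
    (n46 : ¬ G.Adj u4 u6) (h24 : u2 ≠ u4) (h25 : u2 ≠ u5) (h26 : u2 ≠ u6) (h46 : u4 ≠ u6)
    (hdeg1 : degN G u1 = 2) (hdeg4 : degN G u4 = 5) (h5 : Is5s G u5) (h6 : Is6p G u6)
    (hc : IsColoring34 (deleteVert G u1) c) (hc2 : c u2 = 3)
    (hsat6 : Saturated34 (deleteVert G u1) c 4 u6)
    (hsat5 : Saturated34 (deleteVert G u1) c 3 u5) : ¬ Saturated34 (deleteVert G u1) c 4 u4 := by
  intro hsat4
  have hc1 := isColoring34_update_of_is6p hc a56 a61 (by have := h5.1; omega) h6 hsat6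
  have := hsat4.ncard_adj_add_eq hc.1 (j := 3) rfl
  have := degN_mono (deleteVert_le G u1) u4
  have := hsat5.ncard_adj_add_eq hc.1 (j := 4) rfl
  have := degN_mono (deleteVert_le G u1) u5
  have hdeg5 := h5.1
  have n41 : u4 ≠ u1 := fun h => by rw [h] at hdeg4; omega
  have n51 : u5 ≠ u1 := fun h => by rw [h] at hdeg5; omega
  set K := deleteVert G u1
  have h4nbrs : ∀ w, K.Adj u4 w → w ≠ u5 → c w = 4 := fun w hw hw5 =>
    (hc.1 w).resolve_left fun h3 => hw5 <| (Set.ncard_le_one_iff (Set.toFinite _)).1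
      (by omega) (show w ∈ {w | K.Adj u4 w ∧ c w = 3} from ⟨hw, h3⟩) ⟨⟨a45, n41, n51⟩, hsat5.1⟩
  have h5nbrs : ∀ w, K.Adj u5 w → w ≠ u4 → w ≠ u6 → c w = 3 := by
    have hsub : ({u4, u6} : Set V) ⊆ {w | K.Adj u5 w ∧ c w = 4} := by
      rintro _ (rfl | rfl)
      exacts [⟨⟨a45.symm, n51, n41⟩, hsat4.1⟩, ⟨⟨a56, n51, a61.ne⟩, hsat6.1⟩]
    have heq := Set.eq_of_subset_of_ncard_le hsub (by rw [Set.ncard_pair h46]; omega)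
    intro w hw hw4 hw6
    refine (hc.1 w).resolve_right fun h4 => ?_
    have hw' : w ∈ ({u4, u6} : Set V) := heq ▸ ⟨hw, h4⟩
    rcases hw' with rfl | rfl <;> contradiction
  have hc3 : IsColoring34 (deleteVert K u5) (update (update c u6 3) u4 3) :=
    (hc1.mono (deleteVert_le _ u4)).update_of_forall_adj_ne (Or.inl rfl) fun w hw => by
      rw [update_of_ne fun h : w = u6 => n46 (h ▸ hw.1.1), h4nbrs w hw.1 hw.2.2]
      decide
  have hc4 : IsColoring34 K (update (update (update c u6 3) u4 3) u5 4) :=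
    hc3.update_of_forall_adj_ne (Or.inr rfl) fun w hw => by
      rcases eq_or_ne w u4 with rfl | hw4
      · simp
      rcases eq_or_ne w u6 with rfl | hw6
      · simp [h46.symm]
      rw [update_of_ne hw4, update_of_ne hw6, h5nbrs w hw hw4 hw6]
      decide
  exact hnc (colorable34_of_deleteVert_of_eq hdeg1.le a12 a61.symm h26 hc4
    (by simp [h24, h25, h26, hc2, h46.symm, a56.ne.symm]))

theorem not_isColoring34_of_saturated34 (hnc : ¬ Colorable34 G)
    (a12 : G.Adj u1 u2) (a45 : G.Adj u4 u5) (a56 : G.Adj u5 u6) (a61 : G.Adj u6 u1)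
    (n46 : ¬ G.Adj u4 u6) (h24 : u2 ≠ u4) (h25 : u2 ≠ u5) (h26 : u2 ≠ u6) (h46 : u4 ≠ u6)
    (hdeg1 : degN G u1 = 2) (hdeg4 : degN G u4 = 5) (h5 : Is5s G u5)
    (h6 : Is5s G u6 ∨ Is6p G u6) (hc : IsColoring34 (deleteVert G u1) c) (hc2 : c u2 = 3)
    (hsat6 : Saturated34 (deleteVert G u1) c 4 u6) : False := by
  have hdeg5 := h5.1
  have hsat5 := saturated34_three_of_saturated34_four hnc a12 a56 a61 h26 hdeg1 (by omega) h6
    hc hc2 hsat6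
  have h6p : Is6p G u6 := h6.resolve_left fun h => by
    have := hsat6.ncard_adj_add_eq hc.1 (j := 3) rfl
    have := degN_deleteVert_lt a61
    have n51 : u5 ≠ u1 := fun h => by rw [h] at hdeg5; omega
    have := Set.ncard_ne_zero_of_mem (s := {w | (deleteVert G u1).Adj u6 w ∧ c w = 3})
      ⟨⟨a56.symm, a61.ne, n51⟩, hsat5.1⟩
    have := h.1
    omega
  exact not_saturated34_four_of_saturated34_three hnc a12 a45 a56 a61 n46 h24 h25 h26 h46 hdeg1
    hdeg4 h5 h6p hc hc2 hsat6 hsat5 <| saturated34_four_of_saturated34_three hnc a12 a45 a56 a61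
    n46 h25 h26 h46 hdeg1 (by omega) h5 h6p hc hc2 hsat6 hsat5

theorem not_forall_is5s_or_is6p_of_degN_eq_two (hnc : ¬ Colorable34 G)
    (hdel : ∀ v, Colorable34 (deleteVert G v))
    (htri : ∀ a b c : V, G.Adj a b → G.Adj b c → ¬ G.Adj c a)
    (hnd : ([u1, u2, u3, u4, u5, u6] : List V).Nodup)
    (a12 : G.Adj u1 u2) (a23 : G.Adj u2 u3) (a34 : G.Adj u3 u4)
    (a45 : G.Adj u4 u5) (a56 : G.Adj u5 u6) (a61 : G.Adj u6 u1) (hdeg1 : degN G u1 = 2) :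
    ¬ ∀ y ∈ [u1, u2, u3, u4, u5, u6], y ≠ u1 → Is5s G y ∨ Is6p G y := by
  intro hP
  simp only [List.nodup_cons, List.mem_cons, List.not_mem_nil, not_or, not_false_eq_true,
    List.nodup_nil, and_true] at hnd
  obtain ⟨⟨n12, n13, n14, n15, n16⟩, ⟨-, n24, n25, n26⟩, ⟨-, n35, n36⟩, ⟨-, n46⟩, -⟩ := hnd
  have h2 := hP u2 (by simp) (Ne.symm n12)
  have h3 := hP u3 (by simp) (Ne.symm n13)
  have h4 := hP u4 (by simp) (Ne.symm n14)
  have h5 := hP u5 (by simp) (Ne.symm n15)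
  have h6 := hP u6 (by simp) (Ne.symm n16)
  have three_le : ∀ {y}, Is5s G y ∨ Is6p G y → 3 ≤ degN G y := by
    rintro y (h | h) <;> have := h.1 <;> omega
  have h3' := is5s_of_two_le_tpn h3 (two_le_tpn a23.symm a34 n24 (three_le h2) (three_le h4))
  have h4' := is5s_of_two_le_tpn h4 (two_le_tpn a34.symm a45 n35 (three_le h3) (three_le h5))
  have h5' := is5s_of_two_le_tpn h5 (two_le_tpn a45.symm a56 n46 (three_le h4) (three_le h6))
  have no_triangle : ∀ {a b c}, G.Adj a b → G.Adj b c → ¬ G.Adj a c :=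
    fun hab hbc hac => htri _ _ _ hab hbc hac.symm
  obtain ⟨c, hc⟩ := hdel u1
  obtain ⟨x, hx, hsx⟩ :=
    exists_saturated34_of_not_colorable34 hnc (by omega) hc (i := 3) (Or.inl rfl)
  obtain ⟨y, hy, hsy⟩ :=
    exists_saturated34_of_not_colorable34 hnc (by omega) hc (i := 4) (Or.inr rfl)
  have hnb : ∀ {w}, G.Adj u1 w → w = u2 ∨ w = u6 :=
    adj_eq_or_eq_of_degN_le_two hdeg1.le a12 a61.symm n26
  rcases hnb hx with rfl | rfl <;> rcases hnb hy with rfl | rfl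
  · exact absurd (hsx.1.symm.trans hsy.1) (by decide)
  · exact not_isColoring34_of_saturated34 hnc a12 a45 a56 a61 (no_triangle a45 a56) n24
      n25 n26 n46 hdeg1 h4'.1 h5' h6 hc hsx.1 hsy
  · exact not_isColoring34_of_saturated34 hnc a61.symm a34.symm a23.symm a12.symm
      (no_triangle a34.symm a23.symm) (Ne.symm n46) (Ne.symm n36) (Ne.symm n26) (Ne.symm n24)
      hdeg1 h4'.1 h3' h2 hc hsx.1 hsy
  · exact absurd (hsx.1.symm.trans hsy.1) (by decide)

theorem not_forall_is5s_or_is6p_of_mem (hnc : ¬ Colorable34 G)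
    (hdel : ∀ v, Colorable34 (deleteVert G v))
    (htri : ∀ a b c : V, G.Adj a b → G.Adj b c → ¬ G.Adj c a)
    (hnd : ([u1, u2, u3, u4, u5, u6] : List V).Nodup)
    (a12 : G.Adj u1 u2) (a23 : G.Adj u2 u3) (a34 : G.Adj u3 u4)
    (a45 : G.Adj u4 u5) (a56 : G.Adj u5 u6) (a61 : G.Adj u6 u1)
    (hx0 : x0 ∈ [u1, u2, u3, u4, u5, u6]) (hdeg : degN G x0 = 2) :
    ¬ ∀ y ∈ [u1, u2, u3, u4, u5, u6], y ≠ x0 → Is5s G y ∨ Is6p G y := by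
  intro hP
  simp only [List.mem_cons, List.not_mem_nil, or_false] at hx0
  rcases hx0 with rfl | rfl | rfl | rfl | rfl | rfl
  · exact not_forall_is5s_or_is6p_of_degN_eq_two hnc hdel htri hnd
      a12 a23 a34 a45 a56 a61 hdeg hP
  · exact not_forall_is5s_or_is6p_of_degN_eq_two hnc hdel htri
      ((List.nodup_rotate (n := 1)).2 hnd) a23 a34 a45 a56 a61 a12 hdeg
      fun y hy => hP y ((List.mem_rotate (n := 1)).1 hy)
  · exact not_forall_is5s_or_is6p_of_degN_eq_two hnc hdel htri
      ((List.nodup_rotate (n := 2)).2 hnd) a34 a45 a56 a61 a12 a23 hdeg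
      fun y hy => hP y ((List.mem_rotate (n := 2)).1 hy)
  · exact not_forall_is5s_or_is6p_of_degN_eq_two hnc hdel htri
      ((List.nodup_rotate (n := 3)).2 hnd) a45 a56 a61 a12 a23 a34 hdeg
      fun y hy => hP y ((List.mem_rotate (n := 3)).1 hy)
  · exact not_forall_is5s_or_is6p_of_degN_eq_two hnc hdel htri
      ((List.nodup_rotate (n := 4)).2 hnd) a56 a61 a12 a23 a34 a45 hdeg
      fun y hy => hP y ((List.mem_rotate (n := 4)).1 hy)
  · exact not_forall_is5s_or_is6p_of_degN_eq_two hnc hdel htri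
      ((List.nodup_rotate (n := 5)).2 hnd) a61 a12 a23 a34 a45 a56 hdeg
      fun y hy => hP y ((List.mem_rotate (n := 5)).1 hy)

end Cycle

end

theorem stmt_15_general {V : Type*} [Fintype V] (G : SimpleGraph V)
    (hG : MinNonColorable34 G) (hgirth : GirthAtLeast5 G)
    (u1 u2 u3 u4 u5 u6 : V)
    (hnd : ([u1, u2, u3, u4, u5, u6] : List V).Nodup)
    (a12 : G.Adj u1 u2) (a23 : G.Adj u2 u3) (a34 : G.Adj u3 u4)
    (a45 : G.Adj u4 u5) (a56 : G.Adj u5 u6) (a61 : G.Adj u6 u1)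
    (h2 : {x ∈ ({u1, u2, u3, u4, u5, u6} : Set V) | degN G x = 2}.ncard = 1) :
    {x ∈ ({u1, u2, u3, u4, u5, u6} : Set V) | Is5s G x ∨ Is6p G x}.ncard ≤ 4 := by
  classical
  by_contra! hS
  obtain ⟨x0, hx0⟩ := Set.ncard_eq_one.1 h2
  obtain ⟨hx0C, hdeg⟩ : x0 ∈ {x ∈ ({u1, u2, u3, u4, u5, u6} : Set V) | degN G x = 2} :=
    hx0 ▸ rfl
  have hC : ({u1, u2, u3, u4, u5, u6} : Set V).ncard ≤ 6 := by
    simpa using (Set.ncard_coe_finset ({u1, u2, u3, u4, u5, u6} : Finset V)).trans_le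
      Finset.card_le_six
  have hall := forall_ne_of_ncard_le_ncard_sep_add_one (P := fun x => Is5s G x ∨ Is6p G x) hx0C
    (by rintro (h | h) <;> have := h.1 <;> omega) (by omega)
  exact not_forall_is5s_or_is6p_of_mem hG.1 hG.2.1 hgirth.1 hnd a12 a23 a34 a45 a56 a61
    (by simpa using hx0C) hdeg fun y hy => hall y (by simpa using hy)

/-- In a minimally non-(3,4)-colorable graph of girth at least 5, if
exactly one vertex of a 6-cycle has degree 2 and none of its vertices is a
5p-vertex, then at most four of its vertices are 5s-vertices or 6p-vertices. -/
theorem stmt_15 {V : Type*} [Fintype V] (G : SimpleGraph V)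
    (hG : MinNonColorable34 G) (hgirth : GirthAtLeast5 G)
    (u1 u2 u3 u4 u5 u6 : V)
    (hnd : ([u1, u2, u3, u4, u5, u6] : List V).Nodup)
    (a12 : G.Adj u1 u2) (a23 : G.Adj u2 u3) (a34 : G.Adj u3 u4)
    (a45 : G.Adj u4 u5) (a56 : G.Adj u5 u6) (a61 : G.Adj u6 u1)
    (h2 : {x ∈ ({u1, u2, u3, u4, u5, u6} : Set V) | degN G x = 2}.ncard = 1)
    (h5p : ∀ x ∈ ({u1, u2, u3, u4, u5, u6} : Set V), ¬ Is5p G x) :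
    {x ∈ ({u1, u2, u3, u4, u5, u6} : Set V) | Is5s G x ∨ Is6p G x}.ncard ≤ 4 :=
  stmt_15_general G hG hgirth u1 u2 u3 u4 u5 u6 hnd a12 a23 a34 a45 a56 a61 h2
end

section
/- Let G be a minimally non-(3,4)-colorable graph with girth at least 5, and let u_1 u_2 u_3 u_4 u_5 u_6 be a 6-cycle in G such that u_1, u_3, u_5 have degree 2 and u_2, u_4, u_6 are 6p-vertices. Then there do not exist vertices v_1 and v_2, distinct from each other and from u_1, ..., u_6, such that u_2 v_1, v_1 v_2, and v_2 u_6 are edges of G (so that u_6 u_1 u_2 v_1 v_2 is a 5-cycle) and at least one of v_1, v_2 has degree 2. -/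
/-!
Fix a (3,4)-coloring `c` of `G − u₁`. It does not extend to the degree-2 vertex `u₁`, which
forces `c u₂ ≠ c u₆`, both `u₂` and `u₆` saturated, and at each of them a saturated neighbor
carrying the color of the other one. Likewise, if a degree-2 neighbor `x` of `u₂` has the color
of `u₂`, moving `x` to the other color frees a slot at `u₂` for `u₁`; so this must fail, i.e. the
second neighbor of `x` is saturated in the color of `u₆`.

By symmetry `v₁` has degree 2. If `c v₁ = c u₂`, then `v₂` is saturated, hence a 3⁺-neighbor of
the 6p-vertex `u₆`, hence the saturated neighbor of `u₆` of color `c u₂`: absurd. Otherwise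
`u₂` has two neighbors of color `c u₆` (`v₁` and its saturated one), and counting the colors
around `u₂` and `u₆` gives `c u₃ = c u₂` and `c u₅ = c u₆`. The recoloring argument at `u₃` and
at `u₅` then yields `c u₄ = c u₆` and `c u₄ = c u₂`.
-/

noncomputable def colorDeg {V : Type*} (G : SimpleGraph V) (c : V → ℕ) (v : V) (i : ℕ) : ℕ :=
  {w | G.Adj v w ∧ c w = i}.ncard

section Counting

variable {V : Type*} {G : SimpleGraph V} {c : V → ℕ}

lemma colorDeg_le_degN [Finite V] (v : V) (i : ℕ) : colorDeg G c v i ≤ degN G v :=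
  Set.ncard_le_ncard fun _ hw => hw.1

lemma colorDeg_add_colorDeg [Finite V] {i j : ℕ} (hij : i ≠ j) (hc : ∀ w, c w = i ∨ c w = j)
    (v : V) :
    colorDeg G c v i + colorDeg G c v j = degN G v := by
  rw [colorDeg, colorDeg, ← Set.ncard_union_eq]
  · congr 1
    ext w
    have := hc w
    simp only [Set.mem_union, Set.mem_ofPred_eq]
    tauto
  · exact Set.disjoint_left.2 fun w hi hj => hij (hi.2.symm.trans hj.2)

lemma two_le_colorDeg [Finite V] {v x y : V} {i : ℕ} (hxy : x ≠ y) (hx : G.Adj v x ∧ c x = i)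
    (hy : G.Adj v y ∧ c y = i) : 2 ≤ colorDeg G c v i := by
  have hsub : ({x, y} : Set V) ⊆ {w | G.Adj v w ∧ c w = i} := by
    rintro w (rfl | rfl)
    exacts [hx, hy]
  rw [← Set.ncard_pair hxy]
  exact Set.ncard_le_ncard hsub

lemma three_le_colorDeg [Finite V] {v x y z : V} {i : ℕ} (hxy : x ≠ y) (hxz : x ≠ z)
    (hyz : y ≠ z) (hx : G.Adj v x ∧ c x = i) (hy : G.Adj v y ∧ c y = i)
    (hz : G.Adj v z ∧ c z = i) : 3 ≤ colorDeg G c v i := by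
  have hsub : ({x, y, z} : Set V) ⊆ {w | G.Adj v w ∧ c w = i} := by
    rintro w (rfl | rfl | rfl)
    exacts [hx, hy, hz]
  rw [← Set.ncard_eq_three.2 ⟨x, y, z, hxy, hxz, hyz, rfl⟩]
  exact Set.ncard_le_ncard hsub

lemma degN_deleteVert_add_one [Finite V] {u v : V} (hvu : G.Adj v u) :
    degN (deleteVert G u) v + 1 = degN G v := by
  have hset : {w | (deleteVert G u).Adj v w} = {w | G.Adj v w} \ {u} := by
    ext w
    simp only [deleteVert, Set.mem_sdiff, Set.mem_ofPred_eq, Set.mem_singleton_iff]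
    exact ⟨fun h => ⟨h.1, h.2.2⟩, fun h => ⟨h.1, hvu.ne, h.2⟩⟩
  rw [degN, hset]
  exact Set.ncard_sdiff_singleton_add_one hvu

lemma three_le_degN_of_saturated [Finite V] {u w : V} {i : ℕ} (hi : 3 ≤ i)
    (hw : Saturated34 (deleteVert G u) c i w) : 3 ≤ degN G w :=
  calc 3 ≤ i := hi
    _ = {x | (deleteVert G u).Adj w x ∧ c x = i}.ncard := hw.2.symm
    _ ≤ degN G w := Set.ncard_le_ncard fun _ hx => hx.1.1

lemma adj_iff_of_degN_eq_two [Finite V] {v a b : V} (hv : degN G v = 2) (ha : G.Adj v a)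
    (hb : G.Adj v b) (hab : a ≠ b) (w : V) : G.Adj v w ↔ w = a ∨ w = b := by
  have hsub : ({a, b} : Set V) ⊆ {w | G.Adj v w} := by
    rintro w (rfl | rfl) <;> assumption
  have heq := Set.eq_of_subset_of_ncard_le hsub (by rw [Set.ncard_pair hab]; exact hv.le)
  rw [← Set.mem_ofPred_eq (p := G.Adj v), ← heq]
  rfl

lemma eq_of_tpn_eq_one {x y z : V} (hx : tpn G x = 1) (hy : G.Adj x y) (hz : G.Adj x z)
    (dy : 3 ≤ degN G y) (dz : 3 ≤ degN G z) : y = z := by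
  obtain ⟨t, ht⟩ := Set.ncard_eq_one.1 hx
  have hy' : y ∈ {w | G.Adj x w ∧ 3 ≤ degN G w} := ⟨hy, dy⟩
  have hz' : z ∈ {w | G.Adj x w ∧ 3 ≤ degN G w} := ⟨hz, dz⟩
  rw [ht] at hy' hz'
  exact hy'.trans hz'.symm

lemma degN_le_two_of_adj_iff {u a b : V} (hu : ∀ w, G.Adj u w ↔ w = a ∨ w = b) : degN G u ≤ 2 := by
  have : {w | G.Adj u w} = {a, b} := Set.ext hu
  rw [degN, this]
  exact (Set.ncard_insert_le a {b}).trans (by rw [Set.ncard_singleton])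

lemma IsColoring34.eq_or_eq_of_ne {a b : V} (hc : IsColoring34 G c) (hab : c a ≠ c b) (w : V) :
    c w = c a ∨ c w = c b := by
  rcases hc.1 w with h | h <;> rcases hc.1 a with h' | h' <;> rcases hc.1 b with h'' | h'' <;> omega

end Counting

section Recoloring

variable {V : Type*} [Finite V] [DecidableEq V] {G H : SimpleGraph V} {c : V → ℕ}

lemma IsColoring34.update_of_adj_or_eq (hc : IsColoring34 H c) {x : V}
    (hGH : ∀ v w, G.Adj v w → H.Adj v w ∨ v = x ∨ w = x) {j : ℕ} (hj : j = 3 ∨ j = 4)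
    (hx : colorDeg G c x j ≤ j)
    (hnb : ∀ w, G.Adj x w → c w = j → ¬ Saturated34 H c j w) :
    IsColoring34 G (Function.update c x j) := by
  refine ⟨fun v => ?_, fun v => ?_⟩
  · rcases eq_or_ne v x with rfl | hv
    · simpa using hj
    · simpa [Function.update_of_ne hv] using hc.1 v
  rcases eq_or_ne v x with rfl | hv
  · rw [Function.update_self]
    refine le_of_eq_of_le (congrArg Set.ncard (Set.ext fun w => ?_)) hx
    simp only [Set.mem_ofPred_eq]
    exact and_congr_right fun h => by rw [Function.update_of_ne h.ne']
  rw [Function.update_of_ne hv]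
  have hsub : {w | G.Adj v w ∧ Function.update c x j w = c v} ⊆
      insert x {w | H.Adj v w ∧ c w = c v} := by
    rintro w ⟨hvw, hw⟩
    rcases eq_or_ne w x with rfl | hwx
    · exact Set.mem_insert _ _
    · rw [Function.update_of_ne hwx] at hw
      exact Or.inr ⟨(hGH v w hvw).resolve_right (by tauto), hw⟩
  by_cases hvx : G.Adj v x ∧ c v = j
  · have hlt : {w | H.Adj v w ∧ c w = c v}.ncard < c v := by
      have hsat := hnb v hvx.1.symm hvx.2
      rw [← hvx.2] at hsat
      exact lt_of_le_of_ne (hc.2 v) fun h => hsat ⟨rfl, h⟩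
    calc _ ≤ (insert x {w | H.Adj v w ∧ c w = c v}).ncard := Set.ncard_le_ncard hsub
      _ ≤ {w | H.Adj v w ∧ c w = c v}.ncard + 1 := Set.ncard_insert_le _ _
      _ ≤ c v := hlt
  · refine le_trans (Set.ncard_le_ncard fun w hw => ?_) (hc.2 v)
    rcases hsub hw with rfl | hw'
    · exact absurd ⟨hw.1, by simpa using hw.2.symm⟩ hvx
    · exact hw'

lemma IsColoring34.update (hc : IsColoring34 H c) {x : V} {j : ℕ} (hj : j = 3 ∨ j = 4)
    (hx : colorDeg H c x j ≤ j)
    (hnb : ∀ w, H.Adj x w → c w = j → ¬ Saturated34 H c j w) :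
    IsColoring34 H (Function.update c x j) :=
  hc.update_of_adj_or_eq (fun _ _ h => Or.inl h) hj hx hnb

lemma colorable34_of_extend {u : V} (hc : IsColoring34 (deleteVert G u) c) (hu : degN G u ≤ 3)
    {j : ℕ} (hj : j = 3 ∨ j = 4)
    (hnb : ∀ w, G.Adj u w → c w = j → ¬ Saturated34 (deleteVert G u) c j w) :
    Colorable34 G :=
  have hGH (v w : V) (h : G.Adj v w) : (deleteVert G u).Adj v w ∨ v = u ∨ w = u :=
    if hv : v = u then Or.inr (Or.inl hv)
    else if hw : w = u then Or.inr (Or.inr hw) else Or.inl ⟨h, hv, hw⟩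
  ⟨_, hc.update_of_adj_or_eq hGH hj ((colorDeg_le_degN u j).trans (by omega)) hnb⟩

end Recoloring

section DegreeTwo

variable {V : Type*} [Finite V] [DecidableEq V] {G : SimpleGraph V} {c : V → ℕ} {u a b : V}

lemma color_ne_of_not_colorable34 (hG : ¬ Colorable34 G)
    (hc : IsColoring34 (deleteVert G u) c) (hu : ∀ w, G.Adj u w ↔ w = a ∨ w = b) :
    c a ≠ c b := by
  intro hab
  have ha := hc.1 a
  refine hG (colorable34_of_extend hc ((degN_le_two_of_adj_iff hu).trans (by norm_num))
    (j := 7 - c a) (by omega) fun w hw hcw => ?_)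
  rcases (hu w).1 hw with rfl | rfl <;> omega

lemma saturated_of_not_colorable34 (hG : ¬ Colorable34 G)
    (hc : IsColoring34 (deleteVert G u) c) (hu : ∀ w, G.Adj u w ↔ w = a ∨ w = b) :
    Saturated34 (deleteVert G u) c (c a) a := by
  by_contra hsat
  refine hG (colorable34_of_extend hc ((degN_le_two_of_adj_iff hu).trans (by norm_num))
    (hc.1 a) fun w hw hcw => ?_)
  rcases (hu w).1 hw with rfl | rfl
  · exact hsat
  · exact absurd hcw (color_ne_of_not_colorable34 hG hc hu).symm

lemma colorDeg_add_of_not_colorable34 (hG : ¬ Colorable34 G)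
    (hc : IsColoring34 (deleteVert G u) c) (hu : ∀ w, G.Adj u w ↔ w = a ∨ w = b) :
    colorDeg (deleteVert G u) c a (c b) + c a + 1 = degN G a := by
  have hab := color_ne_of_not_colorable34 hG hc hu
  have hsat : colorDeg (deleteVert G u) c a (c a) = c a :=
    (saturated_of_not_colorable34 hG hc hu).2
  rw [← degN_deleteVert_add_one ((hu a).2 (Or.inl rfl)).symm,
    ← colorDeg_add_colorDeg hab (hc.eq_or_eq_of_ne hab) a, hsat, add_comm (c a)]

lemma exists_adj_saturated_of_not_colorable34 (hG : ¬ Colorable34 G)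
    (hc : IsColoring34 (deleteVert G u) c) (hu : ∀ w, G.Adj u w ↔ w = a ∨ w = b)
    (ha : degN G a ≤ 8) :
    ∃ s, (deleteVert G u).Adj a s ∧ Saturated34 (deleteVert G u) c (c b) s := by
  have hab := color_ne_of_not_colorable34 hG hc hu
  have hcount := colorDeg_add_of_not_colorable34 hG hc hu
  have ha34 := hc.1 a
  have hb34 := hc.1 b
  by_contra! hno
  -- `a` has `deg a - 1 - c a ≤ 7 - c a` neighbors of the other color
  have hc' := hc.update (hc.1 b) (x := a) (by omega) fun w hw _ => hno w hw
  refine hG (colorable34_of_extend hc' ((degN_le_two_of_adj_iff hu).trans (by norm_num))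
    (hc.1 a) fun w hw hcw => ?_)
  rcases (hu w).1 hw with rfl | rfl
  · exact absurd (by simpa using hcw) hab.symm
  · rw [Function.update_of_ne (by rintro rfl; exact hab rfl)] at hcw
    exact absurd hcw hab.symm

lemma saturated_of_adj_of_not_colorable34 (hG : ¬ Colorable34 G)
    (hc : IsColoring34 (deleteVert G u) c) (hu : ∀ w, G.Adj u w ↔ w = a ∨ w = b)
    {x y : V} (hax : G.Adj a x) (hxu : x ≠ u) (hx : ∀ w, G.Adj x w → w = a ∨ w = y)
    (hcx : c x = c a) :
    Saturated34 (deleteVert G u) c (c b) y := by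
  have hab := color_ne_of_not_colorable34 hG hc hu
  have hau : a ≠ u := ((hu a).2 (Or.inl rfl)).ne'
  by_contra hy
  have hxdeg : colorDeg (deleteVert G u) c x (c b) ≤ c b := by
    have hsub : {w | (deleteVert G u).Adj x w ∧ c w = c b} ⊆ {a, y} :=
      fun w hw => hx w hw.1.1
    have := hc.1 b
    calc _ ≤ ({a, y} : Set V).ncard := Set.ncard_le_ncard hsub
      _ ≤ 2 := (Set.ncard_insert_le a {y}).trans (by rw [Set.ncard_singleton])
      _ ≤ c b := by omega
  have hc' := hc.update (hc.1 b) hxdeg fun w hw hcw => by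
    rcases hx w hw.1 with rfl | rfl
    · exact absurd hcw hab
    · exact hy
  refine hG (colorable34_of_extend hc' ((degN_le_two_of_adj_iff hu).trans (by norm_num))
    (hc.1 a) fun w hw hcw => ?_)
  rcases (hu w).1 hw with rfl | rfl
  · rintro ⟨-, hsat⟩
    have hsub : {v | (deleteVert G u).Adj w v ∧ Function.update c x (c b) v = c w} ⊆
        {v | (deleteVert G u).Adj w v ∧ c v = c w} \ {x} := by
      rintro v ⟨hwv, hv⟩
      have hvx : v ≠ x := by rintro rfl; simp at hv; exact hab hv.symm
      exact ⟨⟨hwv, by rwa [Function.update_of_ne hvx] at hv⟩, hvx⟩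
    have hdrop := Set.ncard_sdiff_singleton_add_one
      (show x ∈ {v | (deleteVert G u).Adj w v ∧ c v = c w} from ⟨⟨hax, hau, hxu⟩, hcx⟩)
    have := Set.ncard_le_ncard hsub
    have := hc.2 w
    unfold colorDeg at *
    omega
  · rw [Function.update_apply, ite_self] at hcw
    exact absurd hcw.symm hab

lemma color_ne_of_adj_of_tpn_eq_one (hG : ¬ Colorable34 G)
    (hc : IsColoring34 (deleteVert G u) c) (hu : ∀ w, G.Adj u w ↔ w = a ∨ w = b)
    (hb : tpn G b = 1) (hb8 : degN G b ≤ 8) {x y : V} (hax : G.Adj a x) (hxu : x ≠ u)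
    (hx : ∀ w, G.Adj x w → w = a ∨ w = y) (hyb : G.Adj y b) :
    c x ≠ c a := by
  intro hcx
  have ha34 := hc.1 a
  have hb34 := hc.1 b
  obtain ⟨s, hbs, hs⟩ :=
    exists_adj_saturated_of_not_colorable34 hG hc (fun w => (hu w).trans or_comm) hb8
  have hy := saturated_of_adj_of_not_colorable34 hG hc hu hax hxu hx hcx
  have hys := eq_of_tpn_eq_one hb hyb.symm hbs.1 (three_le_degN_of_saturated (by omega) hy)
    (three_le_degN_of_saturated (by omega) hs)
  exact color_ne_of_not_colorable34 hG hc hu (hs.1.symm.trans (hys ▸ hy.1))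

lemma color_ne_of_adj_of_six_cycle (hG : ¬ Colorable34 G)
    (hc : IsColoring34 (deleteVert G u) c) (hu : ∀ w, G.Adj u w ↔ w = a ∨ w = b)
    (ha : degN G a ≤ 6) (hb : degN G b ≤ 6) {x p q r : V}
    (hax : G.Adj a x) (hap : G.Adj a p) (hpq : G.Adj p q) (hqr : G.Adj q r) (hrb : G.Adj r b)
    (dx : degN G x = 2) (dp : degN G p = 2) (dr : degN G r = 2)
    (hxu : x ≠ u) (hpu : p ≠ u) (hru : r ≠ u) (hxp : x ≠ p) (haq : a ≠ q) (hqb : q ≠ b) :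
    c x ≠ c b := by
  intro hcx
  have hu' : ∀ w, G.Adj u w ↔ w = b ∨ w = a := fun w => (hu w).trans or_comm
  have hab := color_ne_of_not_colorable34 hG hc hu
  have hcol := hc.eq_or_eq_of_ne hab
  have hau : a ≠ u := ((hu a).2 (Or.inl rfl)).ne'
  have hbu : b ≠ u := ((hu b).2 (Or.inr rfl)).ne'
  have ha34 := hc.1 a
  have hb34 := hc.1 b
  have hka := colorDeg_add_of_not_colorable34 hG hc hu
  have hkb := colorDeg_add_of_not_colorable34 hG hc hu'
  obtain ⟨s, has, hs⟩ := exists_adj_saturated_of_not_colorable34 hG hc hu (by omega)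
  obtain ⟨t, hbt, ht⟩ := exists_adj_saturated_of_not_colorable34 hG hc hu' (by omega)
  have ds := three_le_degN_of_saturated (by omega) hs
  have dt := three_le_degN_of_saturated (by omega) ht
  have hsx : s ≠ x := by rintro rfl; omega
  have hsp : s ≠ p := by rintro rfl; omega
  have htr : t ≠ r := by rintro rfl; omega
  set H := deleteVert G u
  have hxH : H.Adj a x ∧ c x = c b := ⟨⟨hax, hau, hxu⟩, hcx⟩
  have hxs := two_le_colorDeg hsx.symm hxH ⟨has, hs.1⟩
  -- a third neighbor of `a` of color `c b` would leave `a` fewer than 3 of its own color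
  have hcp : c p = c a := (hcol p).resolve_right fun h => by
    have := three_le_colorDeg hsx.symm hxp hsp hxH ⟨has, hs.1⟩ ⟨⟨hap, hau, hpu⟩, h⟩
    omega
  have hcr : c r = c b := (hcol r).resolve_left fun h => by
    have := two_le_colorDeg htr ⟨hbt, ht.1⟩ ⟨⟨hrb.symm, hbu, hru⟩, h⟩
    omega
  have hq := saturated_of_adj_of_not_colorable34 hG hc hu hap hpu
    (adj_iff_of_degN_eq_two dp hap.symm hpq haq · |>.1) hcp
  have hq' := saturated_of_adj_of_not_colorable34 hG hc hu' hrb.symm hru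
    (adj_iff_of_degN_eq_two dr hrb hqr.symm hqb.symm · |>.1) hcr
  exact hab (hq'.1.symm.trans hq.1)

end DegreeTwo

lemma false_of_degN_eq_two {V : Type*} [Finite V] {G : SimpleGraph V} (hG : MinNonColorable34 G)
    {u1 u2 u3 u4 u5 u6 v1 v2 : V}
    (ne13 : u1 ≠ u3) (ne15 : u1 ≠ u5) (ne24 : u2 ≠ u4) (ne26 : u2 ≠ u6) (ne46 : u4 ≠ u6)
    (hv1u1 : v1 ≠ u1) (hv1u3 : v1 ≠ u3) (hv2u2 : v2 ≠ u2)
    (a12 : G.Adj u1 u2) (a23 : G.Adj u2 u3) (a34 : G.Adj u3 u4)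
    (a45 : G.Adj u4 u5) (a56 : G.Adj u5 u6) (a61 : G.Adj u6 u1)
    (d1 : degN G u1 = 2) (d3 : degN G u3 = 2) (d5 : degN G u5 = 2)
    (p2 : Is6p G u2) (p6 : Is6p G u6)
    (a2v1 : G.Adj u2 v1) (av12 : G.Adj v1 v2) (av26 : G.Adj v2 u6) (dv1 : degN G v1 = 2) :
    False := by
  classical
  obtain ⟨hnc, hdel, -⟩ := hG
  obtain ⟨c, hc⟩ := hdel u1
  have hu := adj_iff_of_degN_eq_two d1 a12 a61.symm ne26
  have hne := color_ne_of_not_colorable34 hnc hc hu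
  rcases hc.eq_or_eq_of_ne hne v1 with h | h
  · exact color_ne_of_adj_of_tpn_eq_one hnc hc hu p6.2 (by rw [p6.1]; norm_num) a2v1 hv1u1
      (adj_iff_of_degN_eq_two dv1 a2v1.symm av12 hv2u2.symm · |>.1) av26 h
  · exact color_ne_of_adj_of_six_cycle hnc hc hu p2.1.le p6.1.le a2v1 a23 a34 a45 a56
      dv1 d3 d5 hv1u1 ne13.symm ne15.symm hv1u3 ne24 ne46 h

theorem stmt_17_general {V : Type*} [Fintype V] (G : SimpleGraph V)
    (hG : MinNonColorable34 G)
    (u1 u2 u3 u4 u5 u6 : V)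
    (hnd : ([u1, u2, u3, u4, u5, u6] : List V).Nodup)
    (a12 : G.Adj u1 u2) (a23 : G.Adj u2 u3) (a34 : G.Adj u3 u4)
    (a45 : G.Adj u4 u5) (a56 : G.Adj u5 u6) (a61 : G.Adj u6 u1)
    (d1 : degN G u1 = 2) (d3 : degN G u3 = 2) (d5 : degN G u5 = 2)
    (p2 : Is6p G u2) (p6 : Is6p G u6) :
    ¬ ∃ v1 v2 : V, v1 ≠ v2 ∧
      v1 ∉ ({u1, u2, u3, u4, u5, u6} : Set V) ∧
      v2 ∉ ({u1, u2, u3, u4, u5, u6} : Set V) ∧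
      G.Adj u2 v1 ∧ G.Adj v1 v2 ∧ G.Adj v2 u6 ∧
      (degN G v1 = 2 ∨ degN G v2 = 2) := by
  rintro ⟨v1, v2, -, hv1, hv2, a2v1, av12, av26, hdeg⟩
  simp only [List.nodup_cons, List.mem_cons, List.not_mem_nil, List.nodup_nil, or_false,
    not_or, and_true] at hnd
  simp only [Set.mem_insert_iff, Set.mem_singleton_iff, not_or] at hv1 hv2
  obtain ⟨⟨-, ne13, -, ne15, -⟩, ⟨-, ne24, -, ne26⟩, -, ⟨-, ne46⟩, -⟩ := hnd
  obtain ⟨hv1u1, -, hv1u3, -, -, hv1u6⟩ := hv1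
  obtain ⟨hv2u1, hv2u2, -, -, hv2u5, -⟩ := hv2
  rcases hdeg with dv1 | dv2
  · exact false_of_degN_eq_two hG ne13 ne15 ne24 ne26 ne46 hv1u1 hv1u3 hv2u2
      a12 a23 a34 a45 a56 a61 d1 d3 d5 p2 p6 a2v1 av12 av26 dv1
  · exact false_of_degN_eq_two hG ne15 ne13 (Ne.symm ne46) (Ne.symm ne26) (Ne.symm ne24)
      hv2u1 hv2u5 hv1u6
      a61.symm a56.symm a45.symm a34.symm a23.symm a12.symm d1 d5 d3 p6 p2
      av26.symm av12.symm a2v1.symm dv2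

/-- In a minimally non-(3,4)-colorable graph of girth at least 5, a
6-cycle `u₁…u₆` with `u₁, u₃, u₅` of degree 2 and `u₂, u₄, u₆` 6p-vertices (the
face `F₆♭`) cannot share the path `u₂u₁u₆` with a 5-cycle `u₆u₁u₂v₁v₂` in which
`v₁` or `v₂` has degree 2. -/
theorem stmt_17 {V : Type*} [Fintype V] (G : SimpleGraph V)
    (hG : MinNonColorable34 G) (hgirth : GirthAtLeast5 G)
    (u1 u2 u3 u4 u5 u6 : V)
    (hnd : ([u1, u2, u3, u4, u5, u6] : List V).Nodup)
    (a12 : G.Adj u1 u2) (a23 : G.Adj u2 u3) (a34 : G.Adj u3 u4)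
    (a45 : G.Adj u4 u5) (a56 : G.Adj u5 u6) (a61 : G.Adj u6 u1)
    (d1 : degN G u1 = 2) (d3 : degN G u3 = 2) (d5 : degN G u5 = 2)
    (p2 : Is6p G u2) (p4 : Is6p G u4) (p6 : Is6p G u6) :
    ¬ ∃ v1 v2 : V, v1 ≠ v2 ∧
      v1 ∉ ({u1, u2, u3, u4, u5, u6} : Set V) ∧
      v2 ∉ ({u1, u2, u3, u4, u5, u6} : Set V) ∧
      G.Adj u2 v1 ∧ G.Adj v1 v2 ∧ G.Adj v2 u6 ∧
      (degN G v1 = 2 ∨ degN G v2 = 2) :=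
  stmt_17_general G hG u1 u2 u3 u4 u5 u6 hnd a12 a23 a34 a45 a56 a61 d1 d3 d5 p2 p6
end
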